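/- arXiv:2507.16473 — 4 statements merged into one kernel-verified Lean document; each statement's English description precedes it below -/
import Mathlib

section
/- The soft option Bellman operator T has a unique fixed point V* : S × O → ℝ (i.e., T V* = V* and any W with T W = W equals V*), and for every initial function V₀ : S × O → ℝ the iterates V_{k+1} = T V_k satisfy ‖V_k − V*‖∞ → 0 as k → ∞. (Convergence of soft option policy evaluation, the core of the Soft Option Policy Iteration Theorem.) -/
open Finset

/-- The soft option Bellman operator has a unique fixed point,
and value iteration from any initial function converges to it in sup norm.
(Convergence of soft option policy evaluation.) -/
theorem soft_option_policy_evaluation_converges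
    {S O A : Type*} [Fintype S] [Fintype O] [Fintype A]
    [Nonempty S] [Nonempty O] [Nonempty A]
    (γ : ℝ) (hγ0 : 0 ≤ γ) (hγ1 : γ < 1)
    (r : S → A → ℝ) (F : S → O → ℝ)
    (p : S → A → S → ℝ) (hp0 : ∀ s a s', 0 ≤ p s a s') (hp1 : ∀ s a, ∑ s', p s a s' = 1)
    (πA : S → O → A → ℝ) (hπA0 : ∀ s o a, 0 ≤ πA s o a) (hπA1 : ∀ s o, ∑ a, πA s o a = 1)
    (πO : S → O → O → ℝ) (hπO0 : ∀ s o o', 0 ≤ πO s o o') (hπO1 : ∀ s o, ∑ o', πO s o o' = 1)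
    (T : (S × O → ℝ) → (S × O → ℝ))
    (hT : ∀ V s o, T V (s, o) = ∑ o', πO s o o' *
      (F s o' + ∑ a, πA s o' a * (r s a + γ * ∑ s', p s a s' * V (s', o'))))
    (supNorm : (S × O → ℝ) → ℝ)
    (hsupNorm : ∀ V, supNorm V = univ.sup' univ_nonempty (fun x => |V x|)) :
    ∃ Vstar : S × O → ℝ, T Vstar = Vstar ∧ (∀ W : S × O → ℝ, T W = W → W = Vstar) ∧
      ∀ V0 : S × O → ℝ,
        Filter.Tendsto (fun k => supNorm (T^[k] V0 - Vstar)) Filter.atTop (nhds 0) := by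
  -- contraction
  have key : ∀ V W : S × O → ℝ, dist (T V) (T W) ≤ γ * dist V W := by
    intro V W
    have hD : (0:ℝ) ≤ dist V W := dist_nonneg
    rw [dist_pi_le_iff (mul_nonneg hγ0 hD)]
    rintro ⟨s, o⟩
    rw [Real.dist_eq]
    have hdiff : T V (s, o) - T W (s, o)
        = ∑ o', πO s o o' * ∑ a, πA s o' a *
            (γ * ∑ s', p s a s' * (V (s', o') - W (s', o'))) := by
      rw [hT, hT, ← Finset.sum_sub_distrib]
      refine Finset.sum_congr rfl fun o' _ => ?_
      rw [← mul_sub]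
      congr 1
      rw [add_sub_add_left_eq_sub, ← Finset.sum_sub_distrib]
      refine Finset.sum_congr rfl fun a _ => ?_
      rw [← mul_sub, add_sub_add_left_eq_sub, ← mul_sub, ← Finset.sum_sub_distrib]
      simp [mul_sub]
    rw [hdiff]
    have hpt : ∀ (s' : S) (o' : O), |V (s', o') - W (s', o')| ≤ dist V W := by
      intro s' o'
      rw [← Real.dist_eq]
      exact dist_le_pi_dist V W (s', o')
    have hin : ∀ (a : A) (o' : O),
        |γ * ∑ s', p s a s' * (V (s', o') - W (s', o'))| ≤ γ * dist V W := by
      intro a o'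
      rw [abs_mul, abs_of_nonneg hγ0]
      refine mul_le_mul_of_nonneg_left ?_ hγ0
      calc |∑ s', p s a s' * (V (s', o') - W (s', o'))|
          ≤ ∑ s', |p s a s' * (V (s', o') - W (s', o'))| :=
            Finset.abs_sum_le_sum_abs _ _
        _ ≤ ∑ s', p s a s' * dist V W := by
            refine Finset.sum_le_sum fun s' _ => ?_
            rw [abs_mul, abs_of_nonneg (hp0 s a s')]
            exact mul_le_mul_of_nonneg_left (hpt s' o') (hp0 s a s')
        _ = dist V W := by rw [← Finset.sum_mul, hp1, one_mul]
    calc |∑ o', πO s o o' * ∑ a, πA s o' a *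
            (γ * ∑ s', p s a s' * (V (s', o') - W (s', o')))|
        ≤ ∑ o', |πO s o o' * ∑ a, πA s o' a *
            (γ * ∑ s', p s a s' * (V (s', o') - W (s', o')))| :=
          Finset.abs_sum_le_sum_abs _ _
      _ ≤ ∑ o', πO s o o' * (γ * dist V W) := by
          refine Finset.sum_le_sum fun o' _ => ?_
          rw [abs_mul, abs_of_nonneg (hπO0 s o o')]
          refine mul_le_mul_of_nonneg_left ?_ (hπO0 s o o')
          calc |∑ a, πA s o' a * (γ * ∑ s', p s a s' * (V (s', o') - W (s', o')))|
              ≤ ∑ a, |πA s o' a * (γ * ∑ s', p s a s' * (V (s', o') - W (s', o')))| :=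
                Finset.abs_sum_le_sum_abs _ _
            _ ≤ ∑ a, πA s o' a * (γ * dist V W) := by
                refine Finset.sum_le_sum fun a _ => ?_
                rw [abs_mul, abs_of_nonneg (hπA0 s o' a)]
                exact mul_le_mul_of_nonneg_left (hin a o') (hπA0 s o' a)
            _ = γ * dist V W := by rw [← Finset.sum_mul, hπA1, one_mul]
      _ = γ * dist V W := by rw [← Finset.sum_mul, hπO1, one_mul]
  have hc : ContractingWith ⟨γ, hγ0⟩ T := by
    constructor
    · exact_mod_cast hγ1
    · exact LipschitzWith.of_dist_le_mul fun V W => key V W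
  have hsn : ∀ f g : S × O → ℝ, supNorm (f - g) = dist f g := by
    intro f g
    rw [hsupNorm]
    apply le_antisymm
    · refine Finset.sup'_le _ _ fun x _ => ?_
      rw [Pi.sub_apply, ← Real.dist_eq]
      exact dist_le_pi_dist f g x
    · rw [dist_pi_le_iff']
      intro x
      rw [Real.dist_eq]
      exact Finset.le_sup' (fun y => |(f - g) y|) (Finset.mem_univ x)
  refine ⟨ContractingWith.fixedPoint T hc, hc.fixedPoint_isFixedPt, ?_, ?_⟩
  · intro W hW
    exact hc.fixedPoint_unique hW
  · intro V0
    have h := hc.tendsto_iterate_fixedPoint V0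
    have h2 := (tendsto_iff_dist_tendsto_zero).mp h
    simpa only [hsn] using h2
end

section
/- The ELBO of the HiT-MDP variational trajectory distribution equals the expected cumulative reward plus option regularizer plus policy log-likelihood (entropy) terms, with the environment dynamics cancelling: Σ_{τ with q(τ) > 0} q(τ) * Real.log (w(τ) / q(τ)) = Σ_{τ with q(τ) > 0} q(τ) * Σ_{t=1}^{T} ( r s_{t−1} a_t + F o_t s_{t−1} a_t o_{t−1} − Real.log (πA s_{t−1} o_t a_t) − Real.log (πO s_{t−1} o_{t−1} o_t) ), where the s_t, o_t, a_t are the components of the trajectory τ. -/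
open Finset

/-- The state `s_{t-1}` preceding step `t` of a HiT-MDP trajectory
`((s_0, o_0), (o_1, a_1, s_1), …, (o_T, a_T, s_T))`. -/
def prevS {S O A : Type*} {T : ℕ} (τ : (S × O) × (Fin T → O × A × S)) (t : Fin T) : S :=
  if t.val = 0 then τ.1.1 else (τ.2 ⟨t.val - 1, by have := t.isLt; omega⟩).2.2

/-- The option `o_{t-1}` preceding step `t` of a HiT-MDP trajectory. -/
def prevO {S O A : Type*} {T : ℕ} (τ : (S × O) × (Fin T → O × A × S)) (t : Fin T) : O :=
  if t.val = 0 then τ.1.2 else (τ.2 ⟨t.val - 1, by have := t.isLt; omega⟩).1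

/-! Where `q τ > 0`, every factor of `q τ` is nonzero, so the common factors `ρ (s₀, o₀)` and
`p s_{t-1} a_t s_t` cancel in `w τ / q τ`, which becomes a product of nonzero per-step ratios
`exp (r + F) / (πA · πO)`; its logarithm is the sum of their logarithms. -/

theorem Real.log_mul_prod_div_mul_prod {ι : Type*} (s : Finset ι) {c : ℝ} {f g : ι → ℝ}
    (hc : c ≠ 0) (hf : ∀ i ∈ s, f i ≠ 0) (hg : ∀ i ∈ s, g i ≠ 0) :
    Real.log ((c * ∏ i ∈ s, f i) / (c * ∏ i ∈ s, g i)) = ∑ i ∈ s, Real.log (f i / g i) := by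
  rw [mul_div_mul_left _ _ hc, ← prod_div_distrib]
  exact Real.log_prod fun i hi => div_ne_zero (hf i hi) (hg i hi)

theorem Real.log_mul_exp_mul_exp_div {a b c x y : ℝ} (h : a * b * c ≠ 0) :
    Real.log (c * Real.exp x * Real.exp y / (a * b * c)) = x + y - Real.log b - Real.log a := by
  obtain ⟨⟨ha, hb⟩, hc⟩ : (a ≠ 0 ∧ b ≠ 0) ∧ c ≠ 0 := by simpa only [mul_ne_zero_iff] using h
  have hratio : c * Real.exp x * Real.exp y / (a * b * c) = Real.exp (x + y) / (b * a) := by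
    rw [Real.exp_add]
    field_simp
  rw [hratio, Real.log_div (Real.exp_ne_zero _) (mul_ne_zero hb ha), Real.log_exp,
    Real.log_mul hb ha]
  ring

theorem hitmdp_elbo_identity_general
    {S O A : Type*} [Fintype S] [Fintype O] [Fintype A]
    (T : ℕ)
    (ρ : S × O → ℝ)
    (p : S → A → S → ℝ)
    (πA : S → O → A → ℝ)
    (πO : S → O → O → ℝ)
    (r : S → A → ℝ) (F : O → S → A → O → ℝ)
    (q : ((S × O) × (Fin T → O × A × S)) → ℝ)
    (hq : ∀ τ, q τ = ρ τ.1 * ∏ t : Fin T,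
      πO (prevS τ t) (prevO τ t) (τ.2 t).1 *
      πA (prevS τ t) (τ.2 t).1 (τ.2 t).2.1 *
      p (prevS τ t) (τ.2 t).2.1 (τ.2 t).2.2)
    (w : ((S × O) × (Fin T → O × A × S)) → ℝ)
    (hw : ∀ τ, w τ = ρ τ.1 * ∏ t : Fin T,
      p (prevS τ t) (τ.2 t).2.1 (τ.2 t).2.2 *
      Real.exp (r (prevS τ t) (τ.2 t).2.1) *
      Real.exp (F (τ.2 t).1 (prevS τ t) (τ.2 t).2.1 (prevO τ t))) :
    ∑ τ ∈ univ.filter (fun τ => 0 < q τ), q τ * Real.log (w τ / q τ) =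
      ∑ τ ∈ univ.filter (fun τ => 0 < q τ), q τ * ∑ t : Fin T,
        (r (prevS τ t) (τ.2 t).2.1
          + F (τ.2 t).1 (prevS τ t) (τ.2 t).2.1 (prevO τ t)
          - Real.log (πA (prevS τ t) (τ.2 t).1 (τ.2 t).2.1)
          - Real.log (πO (prevS τ t) (prevO τ t) (τ.2 t).1)) := by
  refine sum_congr rfl fun τ hτ => congrArg (q τ * ·) ?_
  have hqτ : q τ ≠ 0 := (mem_filter.1 hτ).2.ne'
  rw [hq, mul_ne_zero_iff, prod_ne_zero_iff] at hqτ
  obtain ⟨hρ, hstep⟩ := hqτ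
  have hwstep : ∀ t ∈ univ, p (prevS τ t) (τ.2 t).2.1 (τ.2 t).2.2 *
      Real.exp (r (prevS τ t) (τ.2 t).2.1) *
      Real.exp (F (τ.2 t).1 (prevS τ t) (τ.2 t).2.1 (prevO τ t)) ≠ 0 := fun t ht =>
    mul_ne_zero (mul_ne_zero (right_ne_zero_of_mul (hstep t ht)) (Real.exp_ne_zero _))
      (Real.exp_ne_zero _)
  rw [hw, hq, Real.log_mul_prod_div_mul_prod _ hρ hwstep hstep]
  exact sum_congr rfl fun t ht => Real.log_mul_exp_mul_exp_div (hstep t ht)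

/-- the ELBO of the HiT-MDP variational trajectory distribution
equals the expected cumulative reward plus option regularizer plus policy
entropy (negative log-likelihood) terms; the environment dynamics cancel. -/
theorem hitmdp_elbo_identity
    {S O A : Type*} [Fintype S] [Fintype O] [Fintype A]
    [Nonempty S] [Nonempty O] [Nonempty A]
    (T : ℕ) (hT : 1 ≤ T)
    (ρ : S × O → ℝ) (hρ0 : ∀ x, 0 ≤ ρ x) (hρ1 : ∑ x, ρ x = 1)
    (p : S → A → S → ℝ) (hp0 : ∀ s a s', 0 ≤ p s a s') (hp1 : ∀ s a, ∑ s', p s a s' = 1)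
    (πA : S → O → A → ℝ) (hπA : ∀ s o a, 0 < πA s o a) (hπA1 : ∀ s o, ∑ a, πA s o a = 1)
    (πO : S → O → O → ℝ) (hπO : ∀ s o o', 0 < πO s o o') (hπO1 : ∀ s o, ∑ o', πO s o o' = 1)
    (r : S → A → ℝ) (F : O → S → A → O → ℝ)
    (q : ((S × O) × (Fin T → O × A × S)) → ℝ)
    (hq : ∀ τ, q τ = ρ τ.1 * ∏ t : Fin T,
      πO (prevS τ t) (prevO τ t) (τ.2 t).1 *
      πA (prevS τ t) (τ.2 t).1 (τ.2 t).2.1 *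
      p (prevS τ t) (τ.2 t).2.1 (τ.2 t).2.2)
    (w : ((S × O) × (Fin T → O × A × S)) → ℝ)
    (hw : ∀ τ, w τ = ρ τ.1 * ∏ t : Fin T,
      p (prevS τ t) (τ.2 t).2.1 (τ.2 t).2.2 *
      Real.exp (r (prevS τ t) (τ.2 t).2.1) *
      Real.exp (F (τ.2 t).1 (prevS τ t) (τ.2 t).2.1 (prevO τ t))) :
    ∑ τ ∈ univ.filter (fun τ => 0 < q τ), q τ * Real.log (w τ / q τ) =
      ∑ τ ∈ univ.filter (fun τ => 0 < q τ), q τ * ∑ t : Fin T,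
        (r (prevS τ t) (τ.2 t).2.1
          + F (τ.2 t).1 (prevS τ t) (τ.2 t).2.1 (prevO τ t)
          - Real.log (πA (prevS τ t) (τ.2 t).1 (τ.2 t).2.1)
          - Real.log (πO (prevS τ t) (prevO τ t) (τ.2 t).1)) :=
  hitmdp_elbo_identity_general T ρ p πA πO r F q hq w hw
end

section
/- For every m ∈ ℕ, every e ∈ E and every a ∈ A, the optimal value-iteration functions satisfy Q_m e a = Q̄_m (f e) (g e a). (Optimal value equivalence in HiT-MDP: the optimal action-value iterates of the original decision process and of its homomorphic image agree along the homomorphism.) -/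
open MeasureTheory

/-- Optimal value equivalence in HiT-MDP: the optimal
action-value iterates of the original decision process and of its homomorphic
image agree along the homomorphism. -/
theorem optimal_value_equivalence
    {E Eb : Type*} [MeasurableSpace E] [MeasurableSpace Eb]
    {A Ab : Type*} [Nonempty A] [Nonempty Ab]
    (γ : ℝ) (hγ0 : 0 ≤ γ) (hγ1 : γ < 1)
    (f : E → Eb) (hf : Measurable f)
    (g : E → A → Ab) (hg : ∀ e, Function.Surjective (g e))
    (R : E → A → ℝ) (Rb : Eb → Ab → ℝ)
    (hRbd : ∃ C, ∀ e a, |R e a| ≤ C) (hRbbd : ∃ C, ∀ eb ab, |Rb eb ab| ≤ C)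
    (hrew : ∀ e a, R e a = Rb (f e) (g e a))
    (κ : E → A → Measure E) (κb : Eb → Ab → Measure Eb)
    (hκ : ∀ e a, IsProbabilityMeasure (κ e a))
    (hκb : ∀ eb ab, IsProbabilityMeasure (κb eb ab))
    (hequiv : ∀ e a, (κ e a).map f = κb (f e) (g e a))
    (Q : ℕ → E → A → ℝ) (Qb : ℕ → Eb → Ab → ℝ)
    (hQ0 : ∀ e a, Q 0 e a = R e a)
    (hQs : ∀ m e a, Q (m + 1) e a = R e a + γ * ∫ e', (⨆ a', Q m e' a') ∂(κ e a))
    (hQb0 : ∀ eb ab, Qb 0 eb ab = Rb eb ab)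
    (hQbs : ∀ m eb ab, Qb (m + 1) eb ab = Rb eb ab + γ * ∫ eb', (⨆ ab', Qb m eb' ab') ∂(κb eb ab))
    (hmeas : ∀ m, Measurable (fun eb => ⨆ ab, Qb m eb ab))
    (hbd : ∀ m, ∃ C, ∀ eb, |⨆ ab, Qb m eb ab| ≤ C) :
    ∀ m e a, Q m e a = Qb m (f e) (g e a) := by
  intro m
  induction m with
  | zero => intro e a; rw [hQ0, hQb0, hrew]
  | succ m ih =>
    intro e a
    rw [hQs, hQbs, hrew]
    congr 2
    have h1 : ∀ e', (⨆ a', Q m e' a') = (fun eb => ⨆ ab, Qb m eb ab) (f e') := by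
      intro e'
      simp only
      rw [← (hg e').iSup_comp (fun ab => Qb m (f e') ab)]
      exact iSup_congr fun a' => ih e' a'
    rw [integral_congr_ae (Filter.Eventually.of_forall h1),
      ← integral_map hf.aemeasurable (hmeas m).aestronglyMeasurable, hequiv]
end

section
/- For every m ∈ ℕ, every e ∈ E and every a ∈ A, the policy-evaluation iterates satisfy Q_m e a = Q̄_m (f e) (g e a). (HiT-MDP value equivalence: the action-value function of the lifted policy on the original decision process coincides, along the homomorphism, with the action-value function of the abstract policy on the image decision process.) -/
open MeasureTheory

/-- HiT-MDP value equivalence: the policy-evaluation iterates of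
the lifted policy on the original decision process coincide, along the
homomorphism, with those of the abstract policy on the image process. -/
theorem lifted_policy_value_equivalence
    {E Eb : Type*} [MeasurableSpace E] [MeasurableSpace Eb]
    {A Ab : Type*} [MeasurableSpace A] [MeasurableSpace Ab] [Nonempty A] [Nonempty Ab]
    (γ : ℝ) (hγ0 : 0 ≤ γ) (hγ1 : γ < 1)
    (f : E → Eb) (hf : Measurable f)
    (g : E → A → Ab) (hg : ∀ e, Function.Surjective (g e))
    (R : E → A → ℝ) (Rb : Eb → Ab → ℝ)
    (hRbd : ∃ C, ∀ e a, |R e a| ≤ C) (hRbbd : ∃ C, ∀ eb ab, |Rb eb ab| ≤ C)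
    (hrew : ∀ e a, R e a = Rb (f e) (g e a))
    (κ : E → A → Measure E) (κb : Eb → Ab → Measure Eb)
    (hκ : ∀ e a, IsProbabilityMeasure (κ e a))
    (hκb : ∀ eb ab, IsProbabilityMeasure (κb eb ab))
    (hequiv : ∀ e a, (κ e a).map f = κb (f e) (g e a))
    (πb : Eb → Measure Ab) (hπb : ∀ eb, IsProbabilityMeasure (πb eb))
    (πl : E → Measure A) (hπl : ∀ e, IsProbabilityMeasure (πl e))
    (hlift : ∀ e, (πl e).map (g e) = πb (f e))
    (Q : ℕ → E → A → ℝ) (Qb : ℕ → Eb → Ab → ℝ)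
    (hQ0 : ∀ e a, Q 0 e a = 0)
    (hQs : ∀ m e a, Q (m + 1) e a =
      R e a + γ * ∫ e', (∫ a', Q m e' a' ∂(πl e')) ∂(κ e a))
    (hQb0 : ∀ eb ab, Qb 0 eb ab = 0)
    (hQbs : ∀ m eb ab, Qb (m + 1) eb ab =
      Rb eb ab + γ * ∫ eb', (∫ ab', Qb m eb' ab' ∂(πb eb')) ∂(κb eb ab))
    (hQbbd : ∀ m, ∃ C, ∀ eb ab, |Qb m eb ab| ≤ C)
    (hQbmeas : ∀ m eb, Measurable (fun ab => Qb m eb ab))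
    (hintmeas : ∀ m, Measurable (fun eb => ∫ ab, Qb m eb ab ∂(πb eb))) :
    ∀ m e a, Q m e a = Qb m (f e) (g e a) := by
  intro m
  induction m with
  | zero => intro e a; rw [hQ0, hQb0]
  | succ m ih =>
    intro e a
    rw [hQs, hQbs, hrew]
    congr 1
    congr 1
    have hinner : ∀ e' : E, (∫ a', Q m e' a' ∂(πl e')) = ∫ ab, Qb m (f e') ab ∂(πb (f e')) := by
      intro e'
      have hae : AEMeasurable (g e') (πl e') := by
        by_contra h
        have h0 := Measure.map_of_not_aemeasurable h
        rw [hlift e'] at h0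
        have := (hπb (f e')).measure_univ
        rw [h0] at this
        simp at this
      rw [← hlift e', MeasureTheory.integral_map hae
        ((hQbmeas m (f e')).aestronglyMeasurable)]
      exact integral_congr_ae (Filter.Eventually.of_forall fun a' => ih e' a')
    calc ∫ e', (∫ a', Q m e' a' ∂(πl e')) ∂(κ e a)
        = ∫ e', (∫ ab, Qb m (f e') ab ∂(πb (f e'))) ∂(κ e a) := by
          exact integral_congr_ae (Filter.Eventually.of_forall fun e' => hinner e')
      _ = ∫ eb, (∫ ab, Qb m eb ab ∂(πb eb)) ∂(κb (f e) (g e a)) := by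
          rw [← hequiv e a, MeasureTheory.integral_map hf.aemeasurable
            ((hintmeas m).aestronglyMeasurable)]
end
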